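/- arXiv:2510.07724 — 7 statements merged into one kernel-verified Lean document; each statement's English description precedes it below -/
import Mathlib

section
/- For states on the edge AB, i.e., with (r₁, r₂, r₃) = (1/2, 1/2 − r, r) for 0 < r < 1/2 and any Ω > 0, one has α > 1 and β < 1, where α = sqrt(1 + r(1−2r)Ω²/(1/2 + rΩ)²) and β = sqrt((1+Ω)² − Ω(1−2r)(2 + Ω(1−2r)))/(Ω(1−2r) + 1 + Ω). Hence the quantum speed limit on this edge is the Margolus–Levitin bound. -/
/-- On the edge AB, `(r₁,r₂,r₃) = (1/2, 1/2 − r, r)`, one has `α > 1` and `β < 1` for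
every `Ω > 0`; hence the QSL there is the Margolus–Levitin bound. -/
theorem edgeAB_ML_dominates (Ω r : ℝ) (hΩ : 0 < Ω) (hr0 : 0 < r) (hr : r < 1 / 2) :
    1 < Real.sqrt (1 + r * (1 - 2 * r) * Ω ^ 2 / (1 / 2 + r * Ω) ^ 2) ∧
      Real.sqrt ((1 + Ω) ^ 2 - Ω * (1 - 2 * r) * (2 + Ω * (1 - 2 * r))) /
          (Ω * (1 - 2 * r) + 1 + Ω) < 1 := by
  have h2r : 0 < 1 - 2 * r := by linarith
  constructor
  · have hpos : 0 < r * (1 - 2 * r) * Ω ^ 2 / (1 / 2 + r * Ω) ^ 2 := by positivity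
    have : (1 : ℝ) ^ 2 < 1 + r * (1 - 2 * r) * Ω ^ 2 / (1 / 2 + r * Ω) ^ 2 := by
      nlinarith
    exact (Real.lt_sqrt (by norm_num)).mpr (by nlinarith)
  · have hD : 0 < Ω * (1 - 2 * r) + 1 + Ω := by positivity
    rw [div_lt_one hD]
    have h := (Real.sqrt_lt' hD).mpr (show (1 + Ω) ^ 2 - Ω * (1 - 2 * r) * (2 + Ω * (1 - 2 * r))
        < (Ω * (1 - 2 * r) + 1 + Ω) ^ 2 by nlinarith [mul_pos hΩ h2r])
    exact h
end

section
/- For states on the edge BC, i.e., with (r₁, r₂, r₃) = (1/2 − r, r, 1/2) for 0 < r < 1/2 and any Ω > 0, one has α < 1 and β > 1; explicitly α² = 1 − 4r(1 + 2r + 2Ω)/(1 + 2r + Ω)² and β² = 1 + 4r(1−2r)/(1 − 2r + Ω)². Hence the quantum speed limit on this edge is the dual Margolus–Levitin bound. -/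
/-- On the edge BC, `(r₁,r₂,r₃) = (1/2 − r, r, 1/2)`, one has
`α² = 1 − 4r(1+2r+2Ω)/(1+2r+Ω)²`, `β² = 1 + 4r(1−2r)/(1−2r+Ω)²`, `α < 1` and `β > 1`;
hence the QSL there is the dual Margolus–Levitin bound. -/
theorem edgeBC_MLstar_dominates (Ω r : ℝ) (hΩ : 0 < Ω) (hr0 : 0 < r) (hr : r < 1 / 2) :
    let meanE : ℝ := r + (1 / 2) * (1 + Ω)
    let σ : ℝ := Real.sqrt (r + (1 / 2) * (1 + Ω) ^ 2 - meanE ^ 2)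
    let α : ℝ := σ / meanE
    let β : ℝ := σ / ((1 + Ω) - meanE)
    α ^ 2 = 1 - 4 * r * (1 + 2 * r + 2 * Ω) / (1 + 2 * r + Ω) ^ 2 ∧
      β ^ 2 = 1 + 4 * r * (1 - 2 * r) / (1 - 2 * r + Ω) ^ 2 ∧
      α < 1 ∧ 1 < β := by
  intro meanE σ α β
  have hV : (0:ℝ) < r + (1 / 2) * (1 + Ω) ^ 2 - meanE ^ 2 := by
    simp only [meanE]; nlinarith [sq_nonneg Ω, sq_nonneg (1/2 - r)]
  have hσ2 : σ ^ 2 = r + (1 / 2) * (1 + Ω) ^ 2 - meanE ^ 2 :=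
    Real.sq_sqrt hV.le
  have hσ0 : 0 < σ := Real.sqrt_pos.mpr hV
  have hm : (0:ℝ) < meanE := by simp only [meanE]; nlinarith
  have hd : (0:ℝ) < (1 + Ω) - meanE := by simp only [meanE]; nlinarith
  have h1 : (1 + 2 * r + Ω) ≠ 0 := by nlinarith
  have h2 : (1 - 2 * r + Ω) ≠ 0 := by nlinarith
  have hmean : meanE = (1 + 2 * r + Ω) / 2 := by simp only [meanE]; ring
  have hdiff : (1 + Ω) - meanE = (1 - 2 * r + Ω) / 2 := by simp only [meanE]; ring
  have hVa : σ ^ 2 = ((1 + 2 * r + Ω) ^ 2 - 4 * r * (1 + 2 * r + 2 * Ω)) / 4 := by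
    rw [hσ2]; simp only [meanE]; ring
  have hVb : σ ^ 2 = ((1 - 2 * r + Ω) ^ 2 + 4 * r * (1 - 2 * r)) / 4 := by
    rw [hσ2]; simp only [meanE]; ring
  have hα2 : α ^ 2 = 1 - 4 * r * (1 + 2 * r + 2 * Ω) / (1 + 2 * r + Ω) ^ 2 := by
    have h : α ^ 2 = σ ^ 2 / meanE ^ 2 := div_pow σ meanE 2
    rw [h, hVa, hmean]
    field_simp
    ring
  have hβ2 : β ^ 2 = 1 + 4 * r * (1 - 2 * r) / (1 - 2 * r + Ω) ^ 2 := by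
    have h : β ^ 2 = σ ^ 2 / ((1 + Ω) - meanE) ^ 2 := div_pow σ _ 2
    rw [h, hVb, hdiff]
    field_simp
    ring
  refine ⟨hα2, hβ2, ?_, ?_⟩
  · have hα2lt : α ^ 2 < 1 := by
      rw [hα2]
      have : 0 < 4 * r * (1 + 2 * r + 2 * Ω) / (1 + 2 * r + Ω) ^ 2 := by positivity
      linarith
    have hα0 : 0 ≤ α := le_of_lt (div_pos hσ0 hm)
    nlinarith
  · have hβ2gt : 1 < β ^ 2 := by
      rw [hβ2]
      have h12r : 0 < 1 - 2 * r := by linarith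
      have : 0 < 4 * r * (1 - 2 * r) / (1 - 2 * r + Ω) ^ 2 := by positivity
      linarith
    have hβ0 : 0 < β := div_pos hσ0 hd
    nlinarith
end

section
/- On the edge CA, i.e., (r₁, r₂, r₃) = (r, 1/2, 1/2 − r) with 0 < r < 1/2: (i) if Ω ≤ 1 then α < 1, and if Ω > 1 then α > 1, = 1, or < 1 according as r is greater than, equal to, or less than 1/(1+Ω); (ii) β < 1, = 1, or > 1 according as r is greater than, equal to, or less than (1−Ω)/(2(1+Ω)). -/
/-- On the edge CA, `(r₁,r₂,r₃) = (r, 1/2, 1/2 − r)`: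
(i) if `Ω ≤ 1` then `α < 1`, and if `Ω > 1` then `α` is `>1`, `=1`, or `<1` according as
`r` is greater than, equal to, or less than `1/(1+Ω)`;
(ii) `β` is `<1`, `=1`, or `>1` according as `r` is greater than, equal to, or less than
`(1−Ω)/(2(1+Ω))`. -/
theorem edgeCA_alpha_beta_trichotomy (Ω r : ℝ) (hΩ : 0 < Ω) (hr0 : 0 < r) (hr : r < 1 / 2) :
    let α : ℝ := Real.sqrt (1 + (1 - 2 * r) * (1 + Ω) * (r * (1 + Ω) - 1) /
      (1 - r + Ω * (1 / 2 - r)) ^ 2)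
    let β : ℝ := Real.sqrt (-4 * r ^ 2 * (1 + Ω) ^ 2 + 4 * r * (1 + Ω) + Ω ^ 2) /
      (2 * r * (1 + Ω) + Ω)
    ((Ω ≤ 1 → α < 1) ∧
      (1 < Ω →
        ((1 / (1 + Ω) < r → 1 < α) ∧ (r = 1 / (1 + Ω) → α = 1) ∧ (r < 1 / (1 + Ω) → α < 1)))) ∧
    (((1 - Ω) / (2 * (1 + Ω)) < r → β < 1) ∧
      (r = (1 - Ω) / (2 * (1 + Ω)) → β = 1) ∧
      (r < (1 - Ω) / (2 * (1 + Ω)) → 1 < β)) := by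
  intro α β
  have h1Ω : (0:ℝ) < 1 + Ω := by linarith
  have hD : (0:ℝ) < 1 - r + Ω * (1 / 2 - r) := by nlinarith
  have hD2 : (0:ℝ) < (1 - r + Ω * (1 / 2 - r)) ^ 2 := by positivity
  have hd : (0:ℝ) < 2 * r * (1 + Ω) + Ω := by nlinarith
  have h2Ω : (0:ℝ) < 2 * (1 + Ω) := by linarith
  -- helper for α < 1 case
  have halt : ∀ _ : r < 1 / (1 + Ω), α < 1 := by
    intro h
    have hrΩ : r * (1 + Ω) < 1 := by
      have := (lt_div_iff₀ h1Ω).mp h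
      linarith
    have hnum : (1 - 2 * r) * (1 + Ω) * (r * (1 + Ω) - 1) < 0 :=
      mul_neg_of_pos_of_neg (mul_pos (by linarith) h1Ω) (by linarith)
    have hT := div_neg_of_neg_of_pos hnum hD2
    show Real.sqrt _ < 1
    rw [Real.sqrt_lt' one_pos]
    nlinarith
  refine ⟨⟨?_, ?_⟩, ?_, ?_, ?_⟩
  · intro hΩ1
    apply halt
    rw [lt_div_iff₀ h1Ω]
    nlinarith
  · intro hΩ1
    refine ⟨?_, ?_, halt⟩
    · intro h
      have hrΩ : 1 < r * (1 + Ω) := by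
        have := (div_lt_iff₀ h1Ω).mp h
        linarith
      have hnum : 0 < (1 - 2 * r) * (1 + Ω) * (r * (1 + Ω) - 1) :=
        mul_pos (mul_pos (by linarith) h1Ω) (by linarith)
      have hT := div_pos hnum hD2
      have := Real.lt_sqrt (x := 1)
        (y := 1 + (1 - 2 * r) * (1 + Ω) * (r * (1 + Ω) - 1) / (1 - r + Ω * (1 / 2 - r)) ^ 2)
        (by norm_num)
      rw [this]
      nlinarith
    · intro h
      have hrΩ : r * (1 + Ω) = 1 := by
        rw [h]; exact div_mul_cancel₀ _ h1Ω.ne'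
      show Real.sqrt _ = 1
      rw [show r * (1 + Ω) - 1 = 0 by linarith]
      norm_num
  · intro h
    have h' : 1 - Ω < r * (2 * (1 + Ω)) := (div_lt_iff₀ h2Ω).mp h
    show Real.sqrt _ / _ < 1
    rw [div_lt_one hd, show (2 * r * (1 + Ω) + Ω) = Real.sqrt ((2 * r * (1 + Ω) + Ω)^2) from
      (Real.sqrt_sq hd.le).symm]
    apply Real.sqrt_lt_sqrt
    · nlinarith
    · nlinarith [mul_pos (mul_pos hr0 h1Ω) (show (0:ℝ) < 2*r*(1+Ω)+Ω-(1-Ω) by nlinarith)]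
  · intro h
    have h' : r * (2 * (1 + Ω)) = 1 - Ω := by
      rw [h]; exact div_mul_cancel₀ _ h2Ω.ne'
    show Real.sqrt _ / _ = 1
    rw [show (-4 * r ^ 2 * (1 + Ω) ^ 2 + 4 * r * (1 + Ω) + Ω ^ 2)
        = (2 * r * (1 + Ω) + Ω)^2 by nlinarith, Real.sqrt_sq hd.le, div_self hd.ne']
  · intro h
    have h' : r * (2 * (1 + Ω)) < 1 - Ω := (lt_div_iff₀ h2Ω).mp h
    show 1 < Real.sqrt _ / _
    rw [lt_div_iff₀ hd, one_mul, Real.lt_sqrt hd.le]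
    nlinarith [mul_pos (mul_pos hr0 h1Ω) (show (0:ℝ) < (1-Ω) - 2*r*(1+Ω) by nlinarith)]
end

section
/- If three nonnegative reals r₁, r₂, r₃ sum to 1 and there exist unit complex numbers z₁, z₂, z₃ with r₁z₁ + r₂z₂ + r₃z₃ = 0, then the triangle inequality rᵢ ≤ rⱼ + r_k holds for every permutation (i,j,k) of (1,2,3). Conversely, if r₁, r₂, r₃ ≥ 0 sum to 1 and each rᵢ ≤ 1/2, then such unit complex numbers exist. -/
private lemma aux_forward (a b c : ℝ) (ha : 0 ≤ a) (hb : 0 ≤ b) (hc : 0 ≤ c)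
    (z1 z2 z3 : ℂ) (hz1 : ‖z1‖ = 1) (hz2 : ‖z2‖ = 1)
    (hz3 : ‖z3‖ = 1)
    (heq : (a : ℂ) * z1 + (b : ℂ) * z2 + (c : ℂ) * z3 = 0) : a ≤ b + c := by
  have h : (a : ℂ) * z1 = -((b : ℂ) * z2 + (c : ℂ) * z3) := by linear_combination heq
  calc a = ‖(a : ℂ) * z1‖ := by
        rw [norm_mul, Complex.norm_real, hz1, Real.norm_of_nonneg ha, mul_one]
    _ = ‖(b : ℂ) * z2 + (c : ℂ) * z3‖ := by rw [h, norm_neg]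
    _ ≤ ‖(b : ℂ) * z2‖ + ‖(c : ℂ) * z3‖ := norm_add_le _ _
    _ = b + c := by
        rw [norm_mul, norm_mul, Complex.norm_real, Complex.norm_real, hz2, hz3,
          Real.norm_of_nonneg hb, Real.norm_of_nonneg hc, mul_one, mul_one]

private lemma aux_exists (a b c : ℝ) (ha : 0 < a) (hb : 0 < b) (hc : 0 < c)
    (t1 : a ≤ b + c) (t2 : b ≤ a + c) (t3 : c ≤ a + b) :
    ∃ z1 z2 z3 : ℂ, ‖z1‖ = 1 ∧ ‖z2‖ = 1 ∧ ‖z3‖ = 1 ∧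
      (a : ℂ) * z1 + (b : ℂ) * z2 + (c : ℂ) * z3 = 0 := by
  set p : ℝ := (c ^ 2 - a ^ 2 - b ^ 2) / (2 * a * b) with hp
  set q : ℝ := (b ^ 2 - a ^ 2 - c ^ 2) / (2 * a * c) with hq
  have f0 : (0:ℝ) ≤ a + b + c := by linarith
  have f1 : (0:ℝ) ≤ a + b - c := by linarith
  have f2 : (0:ℝ) ≤ a - b + c := by linarith
  have f3 : (0:ℝ) ≤ -a + b + c := by linarith
  have fprod : (0:ℝ) ≤ (a + b + c) * (a + b - c) * (a - b + c) * (-a + b + c) :=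
    mul_nonneg (mul_nonneg (mul_nonneg f0 f1) f2) f3
  have hp1 : 1 - p ^ 2 ≥ 0 := by
    rw [hp, div_pow, ge_iff_le, sub_nonneg, div_le_one (by positivity)]
    nlinarith [fprod]
  have hq1 : 1 - q ^ 2 ≥ 0 := by
    rw [hq, div_pow, ge_iff_le, sub_nonneg, div_le_one (by positivity)]
    nlinarith [fprod]
  set s : ℝ := Real.sqrt (1 - p ^ 2) with hs
  set t : ℝ := Real.sqrt (1 - q ^ 2) with ht
  have hs2 : s ^ 2 = 1 - p ^ 2 := Real.sq_sqrt hp1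
  have ht2 : t ^ 2 = 1 - q ^ 2 := Real.sq_sqrt hq1
  -- key: b * s = c * t
  have hbsct : b * s = c * t := by
    have h1 : b * s = Real.sqrt (b ^ 2 * (1 - p ^ 2)) := by
      rw [Real.sqrt_mul (by positivity), Real.sqrt_sq hb.le, hs]
    have h2 : c * t = Real.sqrt (c ^ 2 * (1 - q ^ 2)) := by
      rw [Real.sqrt_mul (by positivity), Real.sqrt_sq hc.le, ht]
    rw [h1, h2]
    congr 1
    rw [hp, hq]
    field_simp
    ring
  refine ⟨1, ⟨p, s⟩, ⟨q, -t⟩, by simp, ?_, ?_, ?_⟩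
  · rw [Complex.norm_def, Complex.normSq_mk]
    rw [show p * p + s * s = p ^ 2 + s ^ 2 by ring, hs2]
    simp
  · rw [Complex.norm_def, Complex.normSq_mk]
    rw [show q * q + -t * -t = q ^ 2 + t ^ 2 by ring, ht2]
    simp
  · have hre : a + b * p + c * q = 0 := by
      rw [hp, hq]; field_simp; ring
    have him : b * s + c * (-t) = 0 := by rw [hbsct]; ring
    apply Complex.ext
    · simpa using hre
    · simpa using him

/-- If `r₁z₁ + r₂z₂ + r₃z₃ = 0` for unit complex numbers `zᵢ`, the `rᵢ` obey the
triangle inequalities; conversely, if each `rᵢ ≤ 1/2` then such unit complex numbers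
exist. -/
theorem triangle_condition_unit_vectors (r1 r2 r3 : ℝ)
    (h1 : 0 ≤ r1) (h2 : 0 ≤ r2) (h3 : 0 ≤ r3) (hsum : r1 + r2 + r3 = 1) :
    ((∃ z1 z2 z3 : ℂ, ‖z1‖ = 1 ∧ ‖z2‖ = 1 ∧ ‖z3‖ = 1 ∧
        (r1 : ℂ) * z1 + (r2 : ℂ) * z2 + (r3 : ℂ) * z3 = 0) →
      r1 ≤ r2 + r3 ∧ r2 ≤ r1 + r3 ∧ r3 ≤ r1 + r2) ∧
    ((r1 ≤ 1 / 2 ∧ r2 ≤ 1 / 2 ∧ r3 ≤ 1 / 2) →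
      ∃ z1 z2 z3 : ℂ, ‖z1‖ = 1 ∧ ‖z2‖ = 1 ∧ ‖z3‖ = 1 ∧
        (r1 : ℂ) * z1 + (r2 : ℂ) * z2 + (r3 : ℂ) * z3 = 0) := by
  constructor
  · rintro ⟨z1, z2, z3, hz1, hz2, hz3, heq⟩
    refine ⟨aux_forward r1 r2 r3 h1 h2 h3 z1 z2 z3 hz1 hz2 hz3 heq,
      aux_forward r2 r1 r3 h2 h1 h3 z2 z1 z3 hz2 hz1 hz3 (by linear_combination heq),
      aux_forward r3 r1 r2 h3 h1 h2 z3 z1 z2 hz3 hz1 hz2 (by linear_combination heq)⟩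
  · rintro ⟨hh1, hh2, hh3⟩
    rcases h1.eq_or_lt' with he1 | hp1
    · refine ⟨1, 1, -1, by simp, by simp, by simp, ?_⟩
      have : r2 = 1/2 ∧ r3 = 1/2 := by constructor <;> linarith
      rw [he1, this.1, this.2]; push_cast; ring
    rcases h2.eq_or_lt' with he2 | hp2
    · refine ⟨1, 1, -1, by simp, by simp, by simp, ?_⟩
      have : r1 = 1/2 ∧ r3 = 1/2 := by constructor <;> linarith
      rw [he2, this.1, this.2]; push_cast; ring
    rcases h3.eq_or_lt' with he3 | hp3
    · refine ⟨1, -1, 1, by simp, by simp, by simp, ?_⟩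
      have : r1 = 1/2 ∧ r2 = 1/2 := by constructor <;> linarith
      rw [he3, this.1, this.2]; push_cast; ring
    exact aux_exists r1 r2 r3 hp1 hp2 hp3 (by linarith) (by linarith) (by linarith)
end

section
/- Law-of-sines solution of the orthogonality condition: if r₁e^{iE₁τ} + r₂e^{iE₂τ} + r₃e^{iE₃τ} = 0 with rᵢ > 0 summing to 1, and writing ω_{jk} = E_j − E_k, then rᵢ·(sin ω₃₁τ + sin ω₁₂τ + sin ω₂₃τ) = sin ω_{jk}τ for (i,j,k) a cyclic permutation of (1,2,3), provided the denominator sin ω₃₁τ + sin ω₁₂τ + sin ω₂₃τ ≠ 0. -/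
/-- Law-of-sines solution of the orthogonality condition: if
`r₁e^{iE₁τ} + r₂e^{iE₂τ} + r₃e^{iE₃τ} = 0`, then
`rᵢ · (sin ω₃₁τ + sin ω₁₂τ + sin ω₂₃τ) = sin ω_{jk}τ` for `(i,j,k)` cyclic,
provided the denominator is nonzero. -/
theorem law_of_sines_orthogonality (E1 E2 E3 r1 r2 r3 τ : ℝ)
    (h1 : 0 < r1) (h2 : 0 < r2) (h3 : 0 < r3) (hsum : r1 + r2 + r3 = 1)
    (horth : (r1 : ℂ) * Complex.exp (Complex.I * (E1 * τ)) +
        (r2 : ℂ) * Complex.exp (Complex.I * (E2 * τ)) +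
        (r3 : ℂ) * Complex.exp (Complex.I * (E3 * τ)) = 0)
    (hden : Real.sin ((E3 - E1) * τ) + Real.sin ((E1 - E2) * τ) +
        Real.sin ((E2 - E3) * τ) ≠ 0) :
    r1 * (Real.sin ((E3 - E1) * τ) + Real.sin ((E1 - E2) * τ) + Real.sin ((E2 - E3) * τ)) =
        Real.sin ((E2 - E3) * τ) ∧
      r2 * (Real.sin ((E3 - E1) * τ) + Real.sin ((E1 - E2) * τ) + Real.sin ((E2 - E3) * τ)) =
        Real.sin ((E3 - E1) * τ) ∧
      r3 * (Real.sin ((E3 - E1) * τ) + Real.sin ((E1 - E2) * τ) + Real.sin ((E2 - E3) * τ)) =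
        Real.sin ((E1 - E2) * τ) := by
  have key : ∀ E : ℝ, Complex.I * ((E : ℂ) * (τ : ℂ)) = ((E * τ : ℝ) : ℂ) * Complex.I := by
    intro E; push_cast; ring
  rw [key E1, key E2, key E3] at horth
  have hre := congrArg Complex.re horth
  have him := congrArg Complex.im horth
  simp only [Complex.add_re, Complex.add_im, Complex.mul_re, Complex.mul_im,
    Complex.ofReal_re, Complex.ofReal_im, Complex.exp_ofReal_mul_I_re,
    Complex.exp_ofReal_mul_I_im, Complex.zero_re, Complex.zero_im, zero_mul,
    sub_zero, add_zero, zero_add] at hre him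
  have s1 := Real.sin_sub (E3 * τ) (E1 * τ)
  have s2 := Real.sin_sub (E1 * τ) (E2 * τ)
  have s3 := Real.sin_sub (E2 * τ) (E3 * τ)
  have e1 : (E3 - E1) * τ = E3 * τ - E1 * τ := by ring
  have e2 : (E1 - E2) * τ = E1 * τ - E2 * τ := by ring
  have e3 : (E2 - E3) * τ = E2 * τ - E3 * τ := by ring
  rw [e1, e2, e3, s1, s2, s3]
  refine ⟨?_, ?_, ?_⟩
  · linear_combination (Real.sin (E3*τ) - Real.sin (E2*τ)) * hre +
      (Real.cos (E2*τ) - Real.cos (E3*τ)) * him +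
      (Real.sin (E2*τ) * Real.cos (E3*τ) - Real.cos (E2*τ) * Real.sin (E3*τ)) * hsum
  · linear_combination (Real.sin (E1*τ) - Real.sin (E3*τ)) * hre +
      (Real.cos (E3*τ) - Real.cos (E1*τ)) * him +
      (Real.sin (E3*τ) * Real.cos (E1*τ) - Real.cos (E3*τ) * Real.sin (E1*τ)) * hsum
  · linear_combination (Real.sin (E2*τ) - Real.sin (E1*τ)) * hre +
      (Real.cos (E1*τ) - Real.cos (E2*τ)) * him +
      (Real.sin (E1*τ) * Real.cos (E2*τ) - Real.cos (E1*τ) * Real.sin (E2*τ)) * hsum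
end

section
/- For r₂ and r₃ given by the parametrization r₂ = sin((1+Ω)x)/D, r₃ = −sin(x)/D with D = sin((1+Ω)x) − sin x − sin(Ωx), and x in the admissible interval (π/(1+Ω), min{π, π/Ω}), both α < 1 and β < 1 hold, where α and β are the ratios σ_H/𝓔 and σ_H/𝓔* for energies 0, 1, 1+Ω. Hence the quantum speed limit of any interior qutrit state reaching orthogonality is the Mandelstam–Tamm bound. -/
open Real

/-- Chord inequality for `sin` (sinc is decreasing): for `0 ≤ a ≤ b ≤ π`,
`a * sin b ≤ b * sin a`. -/
lemma qsl_sinc_le {a b : ℝ} (ha : 0 ≤ a) (hab : a ≤ b) (hb0 : 0 < b) (hbπ : b ≤ π) :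
    a * Real.sin b ≤ b * Real.sin a := by
  have key := strictConcaveOn_sin_Icc.concaveOn.2
    (Set.left_mem_Icc.2 Real.pi_pos.le) (⟨hb0.le, hbπ⟩ : b ∈ Set.Icc 0 π)
    (sub_nonneg.2 (div_le_one_of_le₀ hab hb0.le)) (div_nonneg ha hb0.le) (by ring)
  simp only [Real.sin_zero, smul_eq_mul, smul_zero, mul_zero, zero_add, add_zero] at key
  rw [div_mul_cancel₀ a hb0.ne'] at key
  calc a * Real.sin b = b * (a / b * Real.sin b) := by field_simp
    _ ≤ b * Real.sin a := mul_le_mul_of_nonneg_left key hb0.le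

/-- The key inequality `(*)`:
`t sin s cos t < s sin t (cos s + sin (s+t))` on the admissible region. -/
lemma qsl_star {s t : ℝ} (hs0 : 0 < s) (hs2 : s < π / 2) (ht0 : 0 < t) (ht2 : t < π / 2)
    (hst : π / 2 < s + t) :
    t * Real.sin s * Real.cos t < s * Real.sin t * (Real.cos s + Real.sin (s + t)) := by
  have hπ := Real.pi_pos
  have hstπ : s + t < π := by linarith
  have hsinu : 0 < Real.sin (s + t) := Real.sin_pos_of_pos_of_lt_pi (by linarith) hstπ
  have hss0 : 0 < Real.sin s := Real.sin_pos_of_pos_of_lt_pi hs0 (by linarith)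
  have hst0 : 0 < Real.sin t := Real.sin_pos_of_pos_of_lt_pi ht0 (by linarith)
  have hcs0 : 0 < Real.cos s := Real.cos_pos_of_mem_Ioo ⟨by linarith, hs2⟩
  have hct0 : 0 < Real.cos t := Real.cos_pos_of_mem_Ioo ⟨by linarith, ht2⟩
  rcases le_or_gt t s with hts | hts
  · -- case t ≤ s
    have h1 : t * Real.sin s ≤ s * Real.sin t := qsl_sinc_le ht0.le hts hs0 (by linarith)
    have h2 : Real.cos t < Real.sin s := by
      rw [← Real.sin_pi_div_two_sub]
      exact Real.sin_lt_sin_of_lt_of_le_pi_div_two (by linarith) hs2.le (by linarith)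
    have h3 : Real.cos t ≤ Real.sin (s + t) := by
      rw [← Real.sin_pi_div_two_sub, ← Real.sin_pi_sub (s + t)]
      exact Real.sin_le_sin_of_le_of_le_pi_div_two (by linarith) (by linarith) (by linarith)
    have h5 : 1 ≤ Real.sin s + Real.cos s := by
      nlinarith [Real.sin_sq_add_cos_sq s, hss0, hcs0]
    have hss1 : Real.sin s < 1 := by
      nlinarith [Real.sin_sq_add_cos_sq s, hcs0, hss0]
    have step1 : Real.cos t < Real.sin s * (Real.cos s + Real.cos t) := by
      nlinarith [mul_pos (sub_pos.2 hss1) (sub_pos.2 h2),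
        mul_nonneg hss0.le (by linarith : (0:ℝ) ≤ Real.cos s + Real.sin s - 1)]
    have A1 : t * Real.sin s * Real.cos t ≤ t * Real.cos t := by
      nlinarith [mul_nonneg (mul_nonneg ht0.le hct0.le) (sub_nonneg.2 hss1.le)]
    have A2 : t * Real.cos t < t * (Real.sin s * (Real.cos s + Real.cos t)) :=
      mul_lt_mul_of_pos_left step1 ht0
    have A3 : t * (Real.sin s * (Real.cos s + Real.cos t))
        ≤ s * Real.sin t * (Real.cos s + Real.cos t) := by
      nlinarith [mul_nonneg (sub_nonneg.2 h1) (by linarith : (0:ℝ) ≤ Real.cos s + Real.cos t)]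
    have A4 : s * Real.sin t * (Real.cos s + Real.cos t)
        ≤ s * Real.sin t * (Real.cos s + Real.sin (s + t)) := by
      nlinarith [mul_nonneg (mul_nonneg hs0.le hst0.le) (sub_nonneg.2 h3)]
    linarith
  · -- case s < t
    have h := qsl_sinc_le (a := t - s) (b := s + t) (by linarith) (by linarith) (by linarith)
      (by linarith)
    rw [Real.sin_sub, Real.sin_add] at h
    have hn : 0 < Real.sin s * Real.cos t + Real.cos s * Real.sin t := by
      rw [← Real.sin_add]; exact hsinu
    rw [Real.sin_add]
    nlinarith [mul_pos (mul_pos hs0 hst0) hn]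

/-- Companion inequality:
`s sin t cos s < t sin s cos t + s sin t sin (s+t)` on the admissible region. -/
lemma qsl_star2 {s t : ℝ} (hs0 : 0 < s) (hs2 : s < π / 2) (ht0 : 0 < t) (ht2 : t < π / 2)
    (hst : π / 2 < s + t) :
    s * Real.sin t * Real.cos s < t * Real.sin s * Real.cos t + s * Real.sin t * Real.sin (s + t) := by
  have hπ := Real.pi_pos
  have hss0 : 0 < Real.sin s := Real.sin_pos_of_pos_of_lt_pi hs0 (by linarith)
  have hst0 : 0 < Real.sin t := Real.sin_pos_of_pos_of_lt_pi ht0 (by linarith)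
  have hct0 : 0 < Real.cos t := Real.cos_pos_of_mem_Ioo ⟨by linarith, ht2⟩
  have h3 : Real.cos s ≤ Real.sin (s + t) := by
    rw [← Real.sin_pi_div_two_sub, ← Real.sin_pi_sub (s + t)]
    exact Real.sin_le_sin_of_le_of_le_pi_div_two (by linarith) (by linarith) (by linarith)
  have h4 : s * Real.sin t * Real.cos s ≤ s * Real.sin t * Real.sin (s + t) := by
    nlinarith [mul_nonneg (mul_nonneg hs0.le hst0.le) (sub_nonneg.2 h3)]
  nlinarith [mul_pos (mul_pos ht0 hss0) hct0]

/-- The key lemma in `w`-form: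
`cos t * (sin(s+t)² + w² sin s²) < 2 w sin s sin(s+t)` where `s * w = s + t`. -/
lemma qsl_key {s t w : ℝ} (hs0 : 0 < s) (hs2 : s < π / 2) (ht0 : 0 < t) (ht2 : t < π / 2)
    (hst : π / 2 < s + t) (hw : s * w = s + t) :
    Real.cos t * (Real.sin (s + t) ^ 2 + w ^ 2 * Real.sin s ^ 2)
      < 2 * w * Real.sin s * Real.sin (s + t) := by
  have hF2 := qsl_star hs0 hs2 ht0 ht2 hst
  have hF1 := qsl_star2 hs0 hs2 ht0 ht2 hst
  have hct : 0 < Real.cos t := Real.cos_pos_of_mem_Ioo ⟨by linarith [Real.pi_pos], ht2⟩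
  have hFF : 0 < (t * Real.sin s * Real.cos t + s * Real.sin t * Real.sin (s + t)
      - s * Real.sin t * Real.cos s)
      * (s * Real.sin t * (Real.cos s + Real.sin (s + t)) - t * Real.sin s * Real.cos t) :=
    mul_pos (by linarith) (by linarith)
  have hid : Real.cos t * s ^ 2 *
      (2 * w * Real.sin s * Real.sin (s + t)
        - Real.cos t * (Real.sin (s + t) ^ 2 + w ^ 2 * Real.sin s ^ 2))
      = (t * Real.sin s * Real.cos t + s * Real.sin t * Real.sin (s + t)
          - s * Real.sin t * Real.cos s)
        * (s * Real.sin t * (Real.cos s + Real.sin (s + t)) - t * Real.sin s * Real.cos t) := by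
    rw [Real.sin_add]
    linear_combination
      (Real.sin t ^ 2 * s ^ 2 - Real.sin t ^ 2 * Real.cos t ^ 2 * s ^ 2
        - Real.sin t ^ 4 * s ^ 2) * Real.sin_sq_add_cos_sq s
      + (-(Real.sin t ^ 2 * s ^ 2)
          - 2 * Real.sin s * Real.cos s * Real.sin t * Real.cos t * s ^ 2
          - Real.sin s ^ 2 * Real.cos t ^ 2 * s ^ 2
          + Real.sin s ^ 2 * Real.sin t ^ 2 * s ^ 2) * Real.sin_sq_add_cos_sq t
      + (2 * Real.sin s * Real.cos s * Real.sin t * Real.cos t * s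
          - Real.sin s ^ 2 * Real.cos t ^ 2 * t + Real.sin s ^ 2 * Real.cos t ^ 2 * s
          - Real.sin s ^ 2 * Real.cos t ^ 2 * s * w) * hw
  nlinarith [hid, hFF, mul_pos hct (pow_pos hs0 2)]

/-- Bridge lemma: the quantity `2⟨E⟩² - E[E²]` (in unnormalized sine form) is positive. -/
lemma qsl_bridge {x y w : ℝ} (hx0 : 0 < x) (hxπ : x < π) (hy0 : 0 < y) (hyπ : y < π)
    (hxy : π < x + y) (hw : x * w = x + y) :
    (Real.sin x + Real.sin y + -Real.sin (x + y)) * (-Real.sin (x + y) + Real.sin x * w ^ 2)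
      < 2 * (-Real.sin (x + y) + Real.sin x * w) ^ 2 := by
  obtain ⟨s, rfl⟩ : ∃ s, x = 2 * s := ⟨x / 2, by ring⟩
  obtain ⟨t, rfl⟩ : ∃ t, y = 2 * t := ⟨y / 2, by ring⟩
  have hs0 : 0 < s := by linarith
  have hs2 : s < π / 2 := by linarith
  have ht0 : 0 < t := by linarith
  have ht2 : t < π / 2 := by linarith
  have hst : π / 2 < s + t := by linarith
  have hw' : s * w = s + t := by linarith
  have hk := qsl_key hs0 hs2 ht0 ht2 hst hw'
  rw [Real.sin_add] at hk
  have hG : 0 < 2 * w * Real.sin s * (Real.sin s * Real.cos t + Real.cos s * Real.sin t)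
      - Real.cos t * (Real.sin s * Real.cos t + Real.cos s * Real.sin t) ^ 2
      - Real.cos t * w ^ 2 * Real.sin s ^ 2 := by linarith
  have hm : 0 < Real.sin s * Real.sin t - Real.cos s * Real.cos t := by
    have hc := Real.cos_neg_of_pi_div_two_lt_of_lt hst (by linarith [Real.pi_pos])
    rw [Real.cos_add] at hc
    linarith
  have hcs : 0 < Real.cos s := Real.cos_pos_of_mem_Ioo ⟨by linarith [Real.pi_pos], hs2⟩
  have hprod : 0 < Real.cos s * ((Real.sin s * Real.sin t - Real.cos s * Real.cos t)
      * (2 * w * Real.sin s * (Real.sin s * Real.cos t + Real.cos s * Real.sin t)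
        - Real.cos t * (Real.sin s * Real.cos t + Real.cos s * Real.sin t) ^ 2
        - Real.cos t * w ^ 2 * Real.sin s ^ 2)) := mul_pos hcs (mul_pos hm hG)
  have hid : 2 * (-Real.sin (2 * (s + t)) + Real.sin (2 * s) * w) ^ 2
      - (Real.sin (2 * s) + Real.sin (2 * t) + -Real.sin (2 * (s + t)))
        * (-Real.sin (2 * (s + t)) + Real.sin (2 * s) * w ^ 2)
      = 8 * (Real.cos s * ((Real.sin s * Real.sin t - Real.cos s * Real.cos t)
          * (2 * w * Real.sin s * (Real.sin s * Real.cos t + Real.cos s * Real.sin t)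
            - Real.cos t * (Real.sin s * Real.cos t + Real.cos s * Real.sin t) ^ 2
            - Real.cos t * w ^ 2 * Real.sin s ^ 2))) := by
    rw [Real.sin_two_mul, Real.sin_two_mul, Real.sin_two_mul, Real.sin_add, Real.cos_add]
    linear_combination
      (-4 * Real.cos s ^ 2 * Real.sin t ^ 2 * Real.cos t ^ 2
        + 4 * Real.sin s * Real.cos s * Real.sin t * Real.cos t
        + 4 * Real.sin s * Real.cos s * Real.sin t * Real.cos t * w ^ 2
        - 8 * Real.sin s * Real.cos s * Real.sin t * Real.cos t ^ 3
        + 4 * Real.sin s ^ 2 * w ^ 2 + 4 * Real.sin s ^ 2 * Real.cos t ^ 2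
        - 4 * Real.sin s ^ 2 * Real.cos t ^ 2 * w ^ 2 - 4 * Real.sin s ^ 2 * Real.cos t ^ 4
        - 4 * Real.sin s ^ 2 * Real.sin t ^ 2 - 4 * Real.sin s ^ 2 * Real.sin t ^ 2 * w ^ 2
        + 4 * Real.sin s ^ 2 * Real.sin t ^ 2 * Real.cos t ^ 2
        + 4 * Real.sin s ^ 2 * Real.sin t ^ 4) * Real.sin_sq_add_cos_sq s
      + (-4 * Real.sin s * Real.cos s * Real.sin t * Real.cos t
          - 4 * Real.sin s ^ 2 * w ^ 2 - 4 * Real.sin s ^ 2 * Real.cos t ^ 2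
          + 4 * Real.sin s ^ 2 * Real.sin t ^ 2
          + 8 * Real.sin s ^ 3 * Real.cos s * Real.sin t * Real.cos t
          + 4 * Real.sin s ^ 4 * w ^ 2 + 4 * Real.sin s ^ 4 * Real.cos t ^ 2
          - 4 * Real.sin s ^ 4 * Real.sin t ^ 2) * Real.sin_sq_add_cos_sq t
  have main : (Real.sin (2 * s) + Real.sin (2 * t) + -Real.sin (2 * (s + t)))
      * (-Real.sin (2 * (s + t)) + Real.sin (2 * s) * w ^ 2)
      < 2 * (-Real.sin (2 * (s + t)) + Real.sin (2 * s) * w) ^ 2 := by linarith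
  rw [show 2 * s + 2 * t = 2 * (s + t) by ring]
  exact main

/-- If `0 < d² * g` then `0 < g`. -/
lemma qsl_pos_factor {d g : ℝ} (h : 0 < d ^ 2 * g) : 0 < g := by
  by_contra hg
  push_neg at hg
  nlinarith [sq_nonneg d]

set_option maxHeartbeats 1000000 in
/-- For interior qutrit states reaching orthogonality (parametrized by the first
orthogonality time `x`), both `α < 1` and `β < 1` hold, hence the quantum speed limit
is the Mandelstam–Tamm bound. -/
theorem interior_MT_dominates (Ω x : ℝ) (hΩ : 0 < Ω)
    (hx1 : Real.pi / (1 + Ω) < x) (hx2 : x < min Real.pi (Real.pi / Ω))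
    (hD : Real.sin ((1 + Ω) * x) - Real.sin x - Real.sin (Ω * x) ≠ 0)
    (r2 r3 : ℝ)
    (hr2 : r2 = Real.sin ((1 + Ω) * x) /
      (Real.sin ((1 + Ω) * x) - Real.sin x - Real.sin (Ω * x)))
    (hr3 : r3 = -Real.sin x /
      (Real.sin ((1 + Ω) * x) - Real.sin x - Real.sin (Ω * x)))
    (h2 : r2 ∈ Set.Ioo (0 : ℝ) (1 / 2)) (h3 : r3 ∈ Set.Ioo (0 : ℝ) (1 / 2))
    (h1 : 1 - r2 - r3 ∈ Set.Ioo (0 : ℝ) (1 / 2)) :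
    let meanE : ℝ := r2 + r3 * (1 + Ω)
    let σ : ℝ := Real.sqrt (r2 + r3 * (1 + Ω) ^ 2 - meanE ^ 2)
    σ / meanE < 1 ∧ σ / ((1 + Ω) - meanE) < 1 := by
  intro meanE σ
  have hμdef : meanE = r2 + r3 * (1 + Ω) := rfl
  have hσdef : σ = Real.sqrt (r2 + r3 * (1 + Ω) ^ 2 - meanE ^ 2) := rfl
  have hπ := Real.pi_pos
  have hΩ1 : (0:ℝ) < 1 + Ω := by linarith
  have hx0 : 0 < x := lt_trans (div_pos hπ hΩ1) hx1
  have hxπ : x < π := lt_of_lt_of_le hx2 (min_le_left _ _)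
  have hxΩ : x < π / Ω := lt_of_lt_of_le hx2 (min_le_right _ _)
  have hΩx0 : 0 < Ω * x := mul_pos hΩ hx0
  have hΩxπ : Ω * x < π := by
    have := (lt_div_iff₀ hΩ).mp hxΩ
    linarith
  have hπx : π < x + Ω * x := by
    have := (div_lt_iff₀ hΩ1).mp hx1
    nlinarith
  have H1 := qsl_bridge hx0 hxπ hΩx0 hΩxπ hπx (by ring : x * (1 + Ω) = x + Ω * x)
  rw [show x + Ω * x = (1 + Ω) * x by ring] at H1
  have H2 := qsl_bridge hΩx0 hΩxπ hx0 hxπ (by linarith)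
    (by field_simp; ring : Ω * x * ((1 + Ω) / Ω) = Ω * x + x)
  rw [show Ω * x + x = (1 + Ω) * x by ring] at H2
  set Dv := Real.sin ((1 + Ω) * x) - Real.sin x - Real.sin (Ω * x) with hDv
  have hA0 : 0 < Real.sin x := Real.sin_pos_of_pos_of_lt_pi hx0 hxπ
  have hDneg : Dv < 0 := by
    rcases lt_or_gt_of_ne hD with h | h
    · exact h
    · exfalso
      have : r3 < 0 := by
        rw [hr3]
        exact div_neg_of_neg_of_pos (by linarith) h
      linarith [h3.1]
  have hSCe : Real.sin ((1 + Ω) * x) = r2 * Dv := by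
    rw [hr2]; field_simp
  have hAe : Real.sin x = -(r3 * Dv) := by
    rw [hr3]; field_simp
  have hBe : Real.sin (Ω * x) = (r2 + r3 - 1) * Dv := by
    have h := hDv
    rw [hSCe, hAe] at h
    linarith
  rw [hSCe, hAe, hBe] at H1 H2
  have hH1' : 0 < Dv ^ 2 * (2 * (r2 + r3 * (1 + Ω)) ^ 2 - (r2 + r3 * (1 + Ω) ^ 2)) := by
    have e : Dv ^ 2 * (2 * (r2 + r3 * (1 + Ω)) ^ 2 - (r2 + r3 * (1 + Ω) ^ 2))
        = 2 * (-(r2 * Dv) + -(r3 * Dv) * (1 + Ω)) ^ 2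
          - (-(r3 * Dv) + (r2 + r3 - 1) * Dv + -(r2 * Dv))
            * (-(r2 * Dv) + -(r3 * Dv) * (1 + Ω) ^ 2) := by ring
    rw [e]
    exact sub_pos.2 H1
  have g1 : 0 < 2 * (r2 + r3 * (1 + Ω)) ^ 2 - (r2 + r3 * (1 + Ω) ^ 2) :=
    qsl_pos_factor hH1'
  have hH2' : 0 < Dv ^ 2 * (2 * (r2 + (1 - r2 - r3) * ((1 + Ω) / Ω)) ^ 2
      - (r2 + (1 - r2 - r3) * ((1 + Ω) / Ω) ^ 2)) := by
    have e : Dv ^ 2 * (2 * (r2 + (1 - r2 - r3) * ((1 + Ω) / Ω)) ^ 2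
        - (r2 + (1 - r2 - r3) * ((1 + Ω) / Ω) ^ 2))
        = 2 * (-(r2 * Dv) + (r2 + r3 - 1) * Dv * ((1 + Ω) / Ω)) ^ 2
          - ((r2 + r3 - 1) * Dv + -(r3 * Dv) + -(r2 * Dv))
            * (-(r2 * Dv) + (r2 + r3 - 1) * Dv * ((1 + Ω) / Ω) ^ 2) := by ring
    rw [e]
    exact sub_pos.2 H2
  have g2' : 0 < 2 * (r2 + (1 - r2 - r3) * ((1 + Ω) / Ω)) ^ 2
      - (r2 + (1 - r2 - r3) * ((1 + Ω) / Ω) ^ 2) :=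
    qsl_pos_factor hH2'
  clear hH1' hH2' H1 H2 hSCe hAe hBe
  have g2 : 0 < 2 * (r2 * Ω + (1 - r2 - r3) * (1 + Ω)) ^ 2
      - (r2 * Ω ^ 2 + (1 - r2 - r3) * (1 + Ω) ^ 2) := by
    have he : 2 * (r2 * Ω + (1 - r2 - r3) * (1 + Ω)) ^ 2
        - (r2 * Ω ^ 2 + (1 - r2 - r3) * (1 + Ω) ^ 2)
        = Ω ^ 2 * (2 * (r2 + (1 - r2 - r3) * ((1 + Ω) / Ω)) ^ 2
          - (r2 + (1 - r2 - r3) * ((1 + Ω) / Ω) ^ 2)) := by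
      field_simp
    rw [he]
    exact mul_pos (by positivity) g2'
  constructor
  · have hμpos : 0 < meanE := by
      rw [hμdef]
      exact add_pos h2.1 (mul_pos h3.1 hΩ1)
    rw [div_lt_one hμpos, hσdef, Real.sqrt_lt' hμpos, hμdef]
    nlinarith [g1]
  · have hβpos : 0 < (1 + Ω) - meanE := by
      rw [hμdef]
      nlinarith [h2.2, h3.2, hΩ]
    rw [div_lt_one hβpos, hσdef, Real.sqrt_lt' hβpos, hμdef]
    nlinarith [g2]
end

section
/- The 3×3 real symmetric matrix H with rows (2U, −√2 J, −2K), (−√2 J, 0, −√2 J), (−2K, −√2 J, 2U) has eigenvalues U − K − sqrt(4J² + (K−U)²), U − K + sqrt(4J² + (K−U)²), and 2(U + K). -/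
/-- The extended Bose–Hubbard matrix has eigenvalues
`U − K ± √(4J² + (K−U)²)` and `2(U+K)`. -/
theorem extended_BH_spectrum (J K U : ℝ) :
    spectrum ℝ (Matrix.of
        ![![2 * U, -Real.sqrt 2 * J, -2 * K],
          ![-Real.sqrt 2 * J, 0, -Real.sqrt 2 * J],
          ![-2 * K, -Real.sqrt 2 * J, 2 * U]] : Matrix (Fin 3) (Fin 3) ℝ) =
      {U - K - Real.sqrt (4 * J ^ 2 + (K - U) ^ 2),
        U - K + Real.sqrt (4 * J ^ 2 + (K - U) ^ 2),
        2 * (U + K)} := by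
  have hr : Real.sqrt 2 ^ 2 = 2 := Real.sq_sqrt (by norm_num)
  have hs : Real.sqrt (4 * J ^ 2 + (K - U) ^ 2) ^ 2 = 4 * J ^ 2 + (K - U) ^ 2 :=
    Real.sq_sqrt (by positivity)
  set s := Real.sqrt (4 * J ^ 2 + (K - U) ^ 2) with hsdef
  ext x
  rw [spectrum.mem_iff, Matrix.isUnit_iff_isUnit_det, isUnit_iff_ne_zero, not_ne_iff]
  rw [Matrix.det_fin_three]
  simp only [Matrix.algebraMap_matrix_apply, Matrix.sub_apply, Matrix.of_apply,
    Matrix.cons_val', Matrix.cons_val_zero, Matrix.cons_val_one, Matrix.head_cons,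
    Matrix.empty_val', Matrix.cons_val_fin_one, Matrix.head_fin_const, Matrix.cons_val_two,
    Matrix.tail_cons]
  norm_num [Fin.ext_iff]
  have key : (x - 2 * U) * x * (x - 2 * U) - (x - 2 * U) * (Real.sqrt 2 * J) * (Real.sqrt 2 * J)
        - Real.sqrt 2 * J * (Real.sqrt 2 * J) * (x - 2 * U)
        + Real.sqrt 2 * J * (Real.sqrt 2 * J) * (2 * K)
        + 2 * K * (Real.sqrt 2 * J) * (Real.sqrt 2 * J) - 2 * K * x * (2 * K) =
      (x - (U - K - s)) * ((x - (U - K + s)) * (x - 2 * (U + K))) := by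
    linear_combination (J ^ 2 * (-2 * x + 4 * U + 4 * K)) * hr + (x - 2 * (U + K)) * hs
  rw [key, mul_eq_zero, mul_eq_zero, sub_eq_zero, sub_eq_zero, sub_eq_zero]
end
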